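/- (Main theorem: matrix-loss domination of the diagonal shrinkage estimator.) Let (Ω, μ) be a probability space and p ≥ 1. For each j = 1, …, p let x_j : Ω → ℝⁿ and g_j : Ω → ℝⁿ be square-integrable random vectors and θ_j ∈ ℝⁿ with E[x_j] = θ_j. Assume the pairs (x_1, g_1), …, (x_p, g_p) are jointly independent across j, and that for each j the cross-product inequality holds: E[⟪x_j − θ_j, g_j⟫] ≥ E[‖g_j‖²] > 0. Then for every real a with 0 < a < 2/p and every nonzero vector α ∈ ℝᵖ, E[‖Σ_{j=1}^p α_j ((x_j − a·g_j) − θ_j)‖²] < E[‖Σ_{j=1}^p α_j (x_j − θ_j)‖²]; that is, the diagonal shrinkage estimator whose j-th column is x_j − a·g_j strictly dominates the estimator with columns x_j under the p × p matrix quadratic loss (Θ̂ − Θ)ᵀ(Θ̂ − Θ), in the sense that the difference of the risk matrices is positive definite for all Θ. -/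

import Mathlib

/-!
With `S = ∑ α j • (x j - θ j)` and `G = ∑ α j • g j`, the risk gap is
`E‖S‖² - E‖S - a • G‖² = 2a E⟪S, G⟫ - a² E‖G‖²`. Independence of the columns together with
`E[x j] = θ j` kills the cross terms of `E⟪S, G⟫`, so by the cross-product inequality it is at
least `T = ∑ α j² E‖g j‖² > 0`, while Cauchy–Schwarz gives `E‖G‖² ≤ p T`. Hence the gap is at
least `a T (2 - a p) > 0`.
-/

open MeasureTheory ProbabilityTheory Finset
open scoped RealInnerProductSpace

theorem norm_sum_sq_le_card_mul_sum_norm_sq {ι E : Type*} [SeminormedAddCommGroup E]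
    (s : Finset ι) (v : ι → E) :
    ‖∑ i ∈ s, v i‖ ^ 2 ≤ #s * ∑ i ∈ s, ‖v i‖ ^ 2 :=
  (pow_le_pow_left₀ (norm_nonneg _) (norm_sum_le _ _) 2).trans (sq_sum_le_card_mul_sum_sq ..)

section

variable {Ω E ι : Type*} [MeasurableSpace Ω] {μ : Measure Ω}
  [NormedAddCommGroup E] [InnerProductSpace ℝ E]

theorem MeasureTheory.MemLp.integrable_inner {f g : Ω → E} (hf : MemLp f 2 μ)
    (hg : MemLp g 2 μ) : Integrable (fun ω => ⟪f ω, g ω⟫) μ :=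
  memLp_one_iff_integrable.1 <| (innerSL ℝ).memLp_of_bilin 1 hf hg

theorem ProbabilityTheory.IndepFun.integral_inner [CompleteSpace E] [MeasurableSpace E]
    [BorelSpace E] {X Y : Ω → E} (hXY : X ⟂ᵢ[μ] Y) (hX : Integrable X μ) (hY : Integrable Y μ) :
    ∫ ω, ⟪X ω, Y ω⟫ ∂μ = ⟪μ[X], μ[Y]⟫ :=
  hXY.integral_bilin hX hY (innerSL ℝ)

theorem integral_norm_sub_smul_sq {S G : Ω → E} (hS : MemLp S 2 μ) (hG : MemLp G 2 μ) (a : ℝ) :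
    ∫ ω, ‖S ω - a • G ω‖ ^ 2 ∂μ =
      ∫ ω, ‖S ω‖ ^ 2 ∂μ - 2 * a * ∫ ω, ⟪S ω, G ω⟫ ∂μ + a ^ 2 * ∫ ω, ‖G ω‖ ^ 2 ∂μ := by
  have hexpand : ∀ ω, ‖S ω - a • G ω‖ ^ 2 =
      ‖S ω‖ ^ 2 - 2 * a * ⟪S ω, G ω⟫ + a ^ 2 * ‖G ω‖ ^ 2 := fun ω => by
    rw [norm_sub_sq_real, real_inner_smul_right, norm_smul, Real.norm_eq_abs, mul_pow, sq_abs]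
    ring
  have hSG : Integrable (fun ω => 2 * a * ⟪S ω, G ω⟫) μ :=
    (hS.integrable_inner hG).const_mul _
  have hSSG : Integrable (fun ω => ‖S ω‖ ^ 2 - 2 * a * ⟪S ω, G ω⟫) μ :=
    hS.norm.integrable_sq.sub hSG
  simp_rw [hexpand]
  rw [integral_add hSSG (hG.norm.integrable_sq.const_mul _),
    integral_sub hS.norm.integrable_sq hSG, integral_const_mul, integral_const_mul]

theorem integral_norm_sub_smul_sq_lt {S G : Ω → E} (hS : MemLp S 2 μ) (hG : MemLp G 2 μ)
    {a c : ℝ} (ha : 0 < a) (hac : a * c < 2) (hSG : 0 < ∫ ω, ⟪S ω, G ω⟫ ∂μ)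
    (hGG : ∫ ω, ‖G ω‖ ^ 2 ∂μ ≤ c * ∫ ω, ⟪S ω, G ω⟫ ∂μ) :
    ∫ ω, ‖S ω - a • G ω‖ ^ 2 ∂μ < ∫ ω, ‖S ω‖ ^ 2 ∂μ := by
  rw [integral_norm_sub_smul_sq hS hG]
  nlinarith [mul_le_mul_of_nonneg_left hGG (sq_nonneg a),
    mul_pos (mul_pos ha hSG) (sub_pos.2 hac)]

theorem integral_inner_sub_eq_zero_of_iIndepFun [IsProbabilityMeasure μ] [CompleteSpace E]
    [MeasurableSpace E] [BorelSpace E] {x g : ι → Ω → E} {θ : ι → E}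
    (hx : ∀ j, Integrable (x j) μ) (hg : ∀ j, Integrable (g j) μ)
    (hmean : ∀ j, ∫ ω, x j ω ∂μ = θ j) (hindep : iIndepFun (fun j ω => (x j ω, g j ω)) μ)
    {j k : ι} (hjk : j ≠ k) :
    ∫ ω, ⟪x j ω - θ j, g k ω⟫ ∂μ = 0 := by
  have hXY : (fun ω => x j ω - θ j) ⟂ᵢ[μ] g k :=
    (hindep.indepFun hjk).comp (measurable_fst.sub_const (θ j)) measurable_snd
  rw [hXY.integral_inner ((hx j).sub (integrable_const _)) (hg k),
    integral_sub (hx j) (integrable_const _), hmean, integral_const]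
  simp

variable [Fintype ι]

theorem integral_inner_sum_smul_of_integral_inner_eq_zero {X Y : ι → Ω → E}
    (hX : ∀ j, MemLp (X j) 2 μ) (hY : ∀ j, MemLp (Y j) 2 μ)
    (horth : ∀ j k, j ≠ k → ∫ ω, ⟪X j ω, Y k ω⟫ ∂μ = 0) (α : ι → ℝ) :
    ∫ ω, ⟪∑ j, α j • X j ω, ∑ k, α k • Y k ω⟫ ∂μ = ∑ j, α j ^ 2 * ∫ ω, ⟪X j ω, Y j ω⟫ ∂μ := by
  have hint : ∀ j k, Integrable (fun ω => α j * α k * ⟪X j ω, Y k ω⟫) μ :=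
    fun j k => ((hX j).integrable_inner (hY k)).const_mul _
  simp_rw [sum_inner, inner_sum, real_inner_smul_left, real_inner_smul_right, ← mul_assoc]
  rw [integral_finsetSum _ fun j _ => integrable_finsetSum _ fun k _ => hint j k]
  refine sum_congr rfl fun j _ => ?_
  rw [integral_finsetSum _ fun k _ => hint j k, sum_eq_single j, integral_const_mul, sq]
  · intro k _ hkj
    rw [integral_const_mul, horth j k hkj.symm, mul_zero]
  · exact fun h => absurd (mem_univ j) h

theorem integral_norm_sum_smul_sq_le {g : ι → Ω → E} (hg : ∀ j, MemLp (g j) 2 μ) (α : ι → ℝ) :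
    ∫ ω, ‖∑ j, α j • g j ω‖ ^ 2 ∂μ ≤
      Fintype.card ι * ∑ j, α j ^ 2 * ∫ ω, ‖g j ω‖ ^ 2 ∂μ := by
  have hint : ∀ j, Integrable (fun ω => α j ^ 2 * ‖g j ω‖ ^ 2) μ :=
    fun j => (hg j).norm.integrable_sq.const_mul _
  have hbound : ∀ ω, ‖∑ j, α j • g j ω‖ ^ 2 ≤
      Fintype.card ι * ∑ j, α j ^ 2 * ‖g j ω‖ ^ 2 := fun ω => by
    simpa [norm_smul, mul_pow] using norm_sum_sq_le_card_mul_sum_norm_sq univ fun j => α j • g j ω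
  calc ∫ ω, ‖∑ j, α j • g j ω‖ ^ 2 ∂μ
      ≤ ∫ ω, Fintype.card ι * ∑ j, α j ^ 2 * ‖g j ω‖ ^ 2 ∂μ :=
        integral_mono (memLp_finsetSum _ fun j _ => (hg j).const_smul (α j)).norm.integrable_sq
          ((integrable_finsetSum _ fun j _ => hint j).const_mul _) hbound
    _ = Fintype.card ι * ∑ j, α j ^ 2 * ∫ ω, ‖g j ω‖ ^ 2 ∂μ := by
        rw [integral_const_mul, integral_finsetSum _ fun j _ => hint j]
        simp_rw [integral_const_mul]

end

theorem diagonal_shrinkage_dominates_matrix_loss_general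
    {Ω : Type*} [MeasurableSpace Ω] (μ : Measure Ω) [IsProbabilityMeasure μ]
    {n p : ℕ}
    (x g : Fin p → Ω → EuclideanSpace ℝ (Fin n))
    (θ : Fin p → EuclideanSpace ℝ (Fin n))
    (hx : ∀ j, MemLp (x j) 2 μ) (hg : ∀ j, MemLp (g j) 2 μ)
    (hmean : ∀ j, ∫ ω, x j ω ∂μ = θ j)
    (hindep : iIndepFun (fun j ω => (x j ω, g j ω)) μ)
    (hcross : ∀ j, (∫ ω, ‖g j ω‖ ^ 2 ∂μ) ≤ ∫ ω, ⟪x j ω - θ j, g j ω⟫ ∂μ)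
    (hpos : ∀ j, 0 < ∫ ω, ‖g j ω‖ ^ 2 ∂μ)
    (a : ℝ) (ha0 : 0 < a) (ha2 : a < 2 / p)
    (α : Fin p → ℝ) (hα : α ≠ 0) :
    (∫ ω, ‖∑ j, α j • ((x j ω - a • g j ω) - θ j)‖ ^ 2 ∂μ) <
      ∫ ω, ‖∑ j, α j • (x j ω - θ j)‖ ^ 2 ∂μ := by
  have hap : a * p < 2 := by
    rcases Nat.eq_zero_or_pos p with rfl | hp
    · simp
    · exact (lt_div_iff₀ (Nat.cast_pos.2 hp)).1 ha2
  have hcentered : ∀ j, MemLp (fun ω => x j ω - θ j) 2 μ := fun j => (hx j).sub (memLp_const _)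
  set T := ∑ j, α j ^ 2 * ∫ ω, ‖g j ω‖ ^ 2 ∂μ
  have hT : 0 < T := by
    obtain ⟨j, hj⟩ := Function.ne_iff.1 hα
    exact sum_pos' (fun k _ => mul_nonneg (sq_nonneg _) (hpos k).le)
      ⟨j, mem_univ j, mul_pos (pow_two_pos_of_ne_zero hj) (hpos j)⟩
  have hcorr : T ≤ ∫ ω, ⟪∑ j, α j • (x j ω - θ j), ∑ k, α k • g k ω⟫ ∂μ := by
    rw [integral_inner_sum_smul_of_integral_inner_eq_zero hcentered hg
      (fun j k => integral_inner_sub_eq_zero_of_iIndepFun (fun j => (hx j).integrable one_le_two)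
        (fun j => (hg j).integrable one_le_two) hmean hindep) α]
    exact sum_le_sum fun j _ => mul_le_mul_of_nonneg_left (hcross j) (sq_nonneg _)
  have hsplit : ∀ ω, ∑ j, α j • ((x j ω - a • g j ω) - θ j) =
      ∑ j, α j • (x j ω - θ j) - a • ∑ j, α j • g j ω := fun ω => by
    rw [smul_sum, ← sum_sub_distrib]
    exact sum_congr rfl fun j _ => by module
  simp_rw [hsplit]
  have hS : MemLp (fun ω => ∑ j, α j • (x j ω - θ j)) 2 μ :=
    memLp_finsetSum _ fun j _ => (hcentered j).const_smul (α j)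
  have hG : MemLp (fun ω => ∑ j, α j • g j ω) 2 μ :=
    memLp_finsetSum _ fun j _ => (hg j).const_smul (α j)
  refine integral_norm_sub_smul_sq_lt hS hG ha0 hap (hT.trans_le hcorr) ?_
  calc ∫ ω, ‖∑ j, α j • g j ω‖ ^ 2 ∂μ ≤ p * T := by
        simpa using integral_norm_sum_smul_sq_le hg α
    _ ≤ p * ∫ ω, ⟪∑ j, α j • (x j ω - θ j), ∑ k, α k • g k ω⟫ ∂μ := by gcongr

/-- Main theorem: matrix-loss domination of the diagonal shrinkage estimator.
If the columns `(x j, g j)` are jointly independent, `E[x j] = θ j`, and each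
column satisfies the cross-product inequality `E⟪x j - θ j, g j⟫ ≥ E‖g j‖² > 0`,
then for `0 < a < 2/p` the diagonal shrinkage estimator with columns
`x j - a • g j` strictly dominates the one with columns `x j` under the
`p × p` matrix quadratic loss: for every nonzero `α : ℝᵖ`,
`E‖∑ j, α j ((x j - a • g j) - θ j)‖² < E‖∑ j, α j (x j - θ j)‖²`. -/
theorem diagonal_shrinkage_dominates_matrix_loss
    {Ω : Type*} [MeasurableSpace Ω] (μ : Measure Ω) [IsProbabilityMeasure μ]
    {n p : ℕ} (hp : 1 ≤ p)
    (x g : Fin p → Ω → EuclideanSpace ℝ (Fin n))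
    (θ : Fin p → EuclideanSpace ℝ (Fin n))
    (hx : ∀ j, MemLp (x j) 2 μ) (hg : ∀ j, MemLp (g j) 2 μ)
    (hmean : ∀ j, ∫ ω, x j ω ∂μ = θ j)
    (hindep : iIndepFun (fun j ω => (x j ω, g j ω)) μ)
    (hcross : ∀ j, (∫ ω, ‖g j ω‖ ^ 2 ∂μ) ≤ ∫ ω, ⟪x j ω - θ j, g j ω⟫ ∂μ)
    (hpos : ∀ j, 0 < ∫ ω, ‖g j ω‖ ^ 2 ∂μ)
    (a : ℝ) (ha0 : 0 < a) (ha2 : a < 2 / p)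
    (α : Fin p → ℝ) (hα : α ≠ 0) :
    (∫ ω, ‖∑ j, α j • ((x j ω - a • g j ω) - θ j)‖ ^ 2 ∂μ) <
      ∫ ω, ‖∑ j, α j • (x j ω - θ j)‖ ^ 2 ∂μ :=
  diagonal_shrinkage_dominates_matrix_loss_general μ x g θ hx hg hmean hindep hcross hpos a ha0 ha2
    α hα
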